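/- Let X and Y be independent, identically distributed nonnegative real random variables with atomless law, and let C be a random variable with values in [0,1] satisfying P(C = 1) < 1, independent of (X, Y). Then P(X > Y·C) > 1/2. -/

import Mathlib

/-!
By symmetry and atomlessness `P(Y < X) = 1/2`, and `Y * C ≤ Y` gives `{Y < X} ⊆ {Y * C < X}`.
The extra mass comes from the disjoint event `{C ≤ c, c * Y < X < Y}` for some `c < 1` with
`P(C ≤ c) > 0`. By independence its probability is `P(C ≤ c)` times the mass of
`{c * y < x < y}` under the product law, which by symmetry is half the mass of the open set
`{c * y < x, c * x < y}`; that set contains `(x, x)` for every positive `x` in the support of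
the law of `X`, so it has positive mass.
-/

open MeasureTheory ProbabilityTheory Set Topology
open scoped ENNReal

namespace MeasureTheory.Measure

section General

variable {α : Type*} [MeasurableSpace α] {ν : Measure α} [SFinite ν]

lemma prod_self_diagonal_eq_zero [MeasurableEq α] (hν : ∀ x, ν {x} = 0) :
    (ν.prod ν) (diagonal α) = 0 := by
  have hslice (x : α) : Prod.mk x ⁻¹' diagonal α = {x} := by
    ext y
    simp [eq_comm]
  simp [prod_apply measurableSet_diagonal, hslice, hν]

lemma prod_self_preimage_swap (s : Set (α × α)) :
    (ν.prod ν) (Prod.swap ⁻¹' s) = (ν.prod ν) s :=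
  calc (ν.prod ν) (Prod.swap ⁻¹' s) = (ν.prod ν).map Prod.swap s :=
        (MeasurableEquiv.prodComm.map_apply s).symm
    _ = (ν.prod ν) s := by rw [prod_swap]

lemma prod_pos_of_mem_support [TopologicalSpace α] {β : Type*} [MeasurableSpace β]
    [TopologicalSpace β] {μ : Measure β} {x : β} {y : α} (hx : x ∈ μ.support)
    (hy : y ∈ ν.support) {s : Set (β × α)} (hs : s ∈ 𝓝 (x, y)) : 0 < (μ.prod ν) s := by
  obtain ⟨u, hu, v, hv, huv⟩ := mem_nhds_prod_iff.1 hs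
  calc 0 < μ u * ν v := ENNReal.mul_pos
        ((mem_support_iff_forall x).1 hx u hu).ne' ((mem_support_iff_forall y).1 hy v hv).ne'
    _ = (μ.prod ν) (u ×ˢ v) := (prod_prod u v).symm
    _ ≤ (μ.prod ν) s := measure_mono huv

variable [LinearOrder α] [TopologicalSpace α] [OrderClosedTopology α]
  [SecondCountableTopology α] [OpensMeasurableSpace α]

lemma two_mul_prod_self_inter_lt (hν : ∀ x, ν {x} = 0) {s : Set (α × α)}
    (hs : Prod.swap ⁻¹' s = s) :
    2 * (ν.prod ν) (s ∩ {p | p.1 < p.2}) = (ν.prod ν) s := by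
  have hgt : (ν.prod ν) (s ∩ {p | p.2 < p.1}) = (ν.prod ν) (s ∩ {p | p.1 < p.2}) := by
    rw [← prod_self_preimage_swap (s ∩ {p | p.1 < p.2}), preimage_inter, hs]
    rfl
  have hdiff : (s \ {p | p.1 < p.2}) \ diagonal α = s ∩ {p | p.2 < p.1} := by
    ext p
    simp only [Set.mem_sdiff, mem_inter_iff, mem_ofPred_eq, mem_diagonal_iff, not_lt]
    grind
  calc 2 * (ν.prod ν) (s ∩ {p | p.1 < p.2})
      = (ν.prod ν) (s ∩ {p | p.1 < p.2}) + (ν.prod ν) (s ∩ {p | p.2 < p.1}) := by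
        rw [two_mul, hgt]
    _ = (ν.prod ν) (s ∩ {p | p.1 < p.2}) + (ν.prod ν) (s \ {p | p.1 < p.2}) := by
        rw [← hdiff, measure_sdiff_null (prod_self_diagonal_eq_zero hν)]
    _ = (ν.prod ν) s := measure_inter_add_sdiff s (measurableSet_lt measurable_fst measurable_snd)

lemma prod_self_snd_lt_fst_eq_half [IsProbabilityMeasure ν] (hν : ∀ x, ν {x} = 0) :
    (ν.prod ν) {p | p.2 < p.1} = 1 / 2 := by
  have h := two_mul_prod_self_inter_lt hν (s := univ) rfl
  rw [univ_inter, measure_univ] at h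
  rw [← prod_self_preimage_swap, ENNReal.eq_div_iff two_ne_zero ENNReal.ofNat_ne_top]
  exact h

end General

variable {ν : Measure ℝ}

lemma exists_pos_mem_support (hν : ν ≠ 0) (h_nonneg : ∀ᵐ x ∂ν, 0 ≤ x)
    (h0 : ν {0} = 0) : ∃ x ∈ ν.support, 0 < x := by
  have := ae_neBot.2 hν
  obtain ⟨x, hx, hx0, hx_ne⟩ :=
    (Filter.Eventually.and support_mem_ae (h_nonneg.and (compl_mem_ae_iff.2 h0))).exists
  exact ⟨x, hx, hx0.lt_of_ne (Ne.symm hx_ne)⟩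

lemma prod_self_mul_snd_lt_fst_lt_snd_pos [SFinite ν] (hν : ∀ x, ν {x} = 0) {x : ℝ}
    (hx : x ∈ ν.support) (hx0 : 0 < x) {c : ℝ} (hc : c < 1) :
    0 < (ν.prod ν) {p | c * p.2 < p.1 ∧ p.1 < p.2} := by
  set W : Set (ℝ × ℝ) := {p | c * p.2 < p.1 ∧ c * p.1 < p.2}
  have hW_open : IsOpen W :=
    (isOpen_lt (continuous_const.mul continuous_snd) continuous_fst).inter
      (isOpen_lt (continuous_const.mul continuous_fst) continuous_snd)
  have hcx : c * x < x := mul_lt_of_lt_one_left hx0 hc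
  have hW : 0 < (ν.prod ν) W := prod_pos_of_mem_support hx hx (hW_open.mem_nhds ⟨hcx, hcx⟩)
  rw [← two_mul_prod_self_inter_lt hν (s := W) (by ext; simp [W, and_comm])] at hW
  exact (ENNReal.mul_pos_iff.1 hW).2.trans_le (measure_mono fun p hp => ⟨hp.1.1, hp.2⟩)

end MeasureTheory.Measure

section RealValued

variable {Ω : Type*} [MeasurableSpace Ω] {μ : Measure Ω} {C : Ω → ℝ} {a : ℝ}

lemma exists_lt_measure_preimage_Iic_pos (h : μ (C ⁻¹' Iio a) ≠ 0) :
    ∃ b < a, 0 < μ (C ⁻¹' Iic b) := by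
  obtain ⟨u, -, hua, hu⟩ := exists_seq_strictMono_tendsto a
  rw [← iUnion_Iic_eq_Iio_of_lt_of_tendsto hua hu, preimage_iUnion] at h
  obtain ⟨n, hn⟩ := exists_measure_pos_of_not_measure_iUnion_null h
  exact ⟨u n, hua n, hn⟩

lemma measure_preimage_Iio_ne_zero [IsProbabilityMeasure μ] (hC : ∀ ω, C ω ≤ a)
    (h : μ {ω | C ω = a} < 1) : μ (C ⁻¹' Iio a) ≠ 0 := by
  refine fun h0 => h.not_ge ?_
  calc 1 = μ univ := measure_univ.symm
    _ ≤ μ ({ω | C ω = a} ∪ C ⁻¹' Iio a) := measure_mono fun ω _ => (hC ω).eq_or_lt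
    _ ≤ μ {ω | C ω = a} + μ (C ⁻¹' Iio a) := measure_union_le _ _
    _ = μ {ω | C ω = a} := by rw [h0, add_zero]

lemma measure_lt_add_measure_le_measure_mul_lt {X Y : Ω → ℝ}
    (hXY : MeasurableSet {ω | Y ω < X ω}) (hY : ∀ ω, 0 ≤ Y ω) (hC : ∀ ω, C ω ≤ 1) (c : ℝ) :
    μ {ω | Y ω < X ω} + μ ({ω | c * Y ω < X ω ∧ X ω < Y ω} ∩ C ⁻¹' Iic c)
      ≤ μ {ω | Y ω * C ω < X ω} := by
  rw [← measure_union' (disjoint_left.2 fun ω hYX hω => hω.1.2.not_gt hYX) hXY]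
  refine measure_mono ?_
  rintro ω (hYX | ⟨⟨hcYX, -⟩, hCω⟩)
  · exact (mul_le_of_le_one_right (hY ω) (hC ω)).trans_lt hYX
  · exact (mul_le_mul_of_nonneg_left hCω (hY ω)).trans_lt (by linarith)

end RealValued

theorem stmt_6_general {Ω : Type*} [MeasurableSpace Ω] (μ : Measure Ω) [IsProbabilityMeasure μ]
    (X Y C : Ω → ℝ) (hX : Measurable X) (hY : Measurable Y)
    (hXpos : ∀ ω, 0 ≤ X ω) (hYpos : ∀ ω, 0 ≤ Y ω)
    (hindep : ProbabilityTheory.IndepFun X Y μ)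
    (hid : Measure.map X μ = Measure.map Y μ)
    (hatomless : ∀ x : ℝ, Measure.map X μ {x} = 0)
    (hCrange : ∀ ω, C ω ∈ Set.Icc (0 : ℝ) 1)
    (hCnot1 : μ {ω | C ω = 1} < 1)
    (hCindep : ProbabilityTheory.IndepFun (fun ω => (X ω, Y ω)) C μ) :
    1 / 2 < μ {ω | Y ω * C ω < X ω} := by
  set ν := μ.map X
  have : IsProbabilityMeasure ν := Measure.isProbabilityMeasure_map hX.aemeasurable
  have hlaw {s : Set (ℝ × ℝ)} (hs : MeasurableSet s) :
      μ ((fun ω => (X ω, Y ω)) ⁻¹' s) = (ν.prod ν) s := by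
    rw [← Measure.map_apply (hX.prodMk hY) hs,
      (indepFun_iff_map_prod_eq_prod_map_map hX.aemeasurable hY.aemeasurable).1 hindep, ← hid]
  obtain ⟨x, hx, hx0⟩ := Measure.exists_pos_mem_support (IsProbabilityMeasure.ne_zero ν)
    ((ae_map_iff hX.aemeasurable measurableSet_Ici).2 (ae_of_all _ hXpos)) (hatomless 0)
  obtain ⟨c, hc, hCc⟩ := exists_lt_measure_preimage_Iic_pos
    (measure_preimage_Iio_ne_zero (fun ω => (hCrange ω).2) hCnot1)
  have hS : MeasurableSet {p : ℝ × ℝ | c * p.2 < p.1 ∧ p.1 < p.2} :=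
    (measurableSet_lt (measurable_const.mul measurable_snd) measurable_fst).inter
      (measurableSet_lt measurable_fst measurable_snd)
  have hextra : 0 < μ ({ω | c * Y ω < X ω ∧ X ω < Y ω} ∩ C ⁻¹' Iic c) := by
    have h := hCindep.measure_inter_preimage_eq_mul _ _ hS (measurableSet_Iic (a := c))
    rw [hlaw hS] at h
    exact (ENNReal.mul_pos
      (Measure.prod_self_mul_snd_lt_fst_lt_snd_pos hatomless hx hx0 hc).ne'
      hCc.ne').trans_eq h.symm
  calc 1 / 2 = μ {ω | Y ω < X ω} := by
        rw [← Measure.prod_self_snd_lt_fst_eq_half hatomless,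
          ← hlaw (measurableSet_lt measurable_snd measurable_fst)]
        rfl
    _ < μ {ω | Y ω < X ω} + μ ({ω | c * Y ω < X ω ∧ X ω < Y ω} ∩ C ⁻¹' Iic c) :=
        ENNReal.lt_add_right (measure_ne_top _ _) hextra.ne'
    _ ≤ μ {ω | Y ω * C ω < X ω} :=
        measure_lt_add_measure_le_measure_mul_lt (measurableSet_lt hY hX) hYpos
          (fun ω => (hCrange ω).2) c

theorem stmt_6 {Ω : Type*} [MeasurableSpace Ω] (μ : Measure Ω) [IsProbabilityMeasure μ]
    (X Y C : Ω → ℝ) (hX : Measurable X) (hY : Measurable Y) (hC : Measurable C)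
    (hXpos : ∀ ω, 0 ≤ X ω) (hYpos : ∀ ω, 0 ≤ Y ω)
    (hindep : ProbabilityTheory.IndepFun X Y μ)
    (hid : Measure.map X μ = Measure.map Y μ)
    (hatomless : ∀ x : ℝ, Measure.map X μ {x} = 0)
    (hCrange : ∀ ω, C ω ∈ Set.Icc (0 : ℝ) 1)
    (hCnot1 : μ {ω | C ω = 1} < 1)
    (hCindep : ProbabilityTheory.IndepFun (fun ω => (X ω, Y ω)) C μ) :
    1 / 2 < μ {ω | Y ω * C ω < X ω} :=
  stmt_6_general μ X Y C hX hY hXpos hYpos hindep hid hatomless hCrange hCnot1 hCindep
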